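/- arXiv:1503.03009 — 4 statements merged into one kernel-verified Lean document; each statement's English description precedes it below -/
import Mathlib

section
/- Any two distinct faces of a 2-colex intersect in an even number of vertices: either 0 or exactly the 2 endpoints of a shared edge. -/
/-!
At a vertex `v` there are three edges and three faces, and each edge lies on two of these faces.
If two faces `f`, `f'` through `v` shared no edge at `v`, every edge at `v` would lie on the
third face `g`; but `f` and `f'` each meet `g` in at most one edge, so together they could not
cover all three edges at `v`. Hence every common vertex of two distinct faces lies on a common
boundary edge, and as the faces share at most one edge, their common vertices are exactly its
two endpoints.
-/

open Finset

theorem Finset.forall_ne_of_card_le_card_filter_add_one {ι : Type*} [DecidableEq ι]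
    {s : Finset ι} {p : ι → Prop} [DecidablePred p] (h : #s ≤ #(s.filter p) + 1)
    {a : ι} (ha : a ∈ s) (hpa : ¬ p a) : ∀ b ∈ s, b ≠ a → p b := by
  have hcard : #((s.erase a).filter p) = #(s.erase a) := by
    refine le_antisymm (card_filter_le _ _) ?_
    rw [filter_erase, erase_eq_of_notMem fun h ↦ hpa (mem_filter.mp h).2, card_erase_of_mem ha]
    omega
  intro b hb hba
  exact filter_card_eq hcard b (mem_erase.mpr ⟨hba, hb⟩)

theorem exists_common_mem_of_double_cover {ι α : Type*} [DecidableEq ι] [DecidableEq α]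
    {F : Finset ι} (hF : #F = 3) {S : ι → Finset α} {E : Finset α} (hE : 3 ≤ #E)
    (hcover : ∀ e ∈ E, 2 ≤ #(F.filter (e ∈ S ·)))
    (hpair : ∀ g ∈ F, ∀ h ∈ F, g ≠ h → #(S g ∩ S h) ≤ 1)
    {f f' : ι} (hf : f ∈ F) (hf' : f' ∈ F) (hne : f ≠ f') :
    ∃ e ∈ E, e ∈ S f ∧ e ∈ S f' := by
  by_contra! hdisj
  obtain ⟨g, hg⟩ : ((F.erase f).erase f').Nonempty := by
    rw [← card_pos, card_erase_of_mem (mem_erase.mpr ⟨hne.symm, hf'⟩), card_erase_of_mem hf, hF]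
    omega
  simp only [mem_erase] at hg
  obtain ⟨hgf', hgf, hg⟩ := hg
  have hE_sub : E ⊆ (S f ∩ S g) ∪ (S f' ∩ S g) := by
    intro e he
    have hall : ∀ a ∈ F, e ∉ S a → ∀ b ∈ F, b ≠ a → e ∈ S b := fun _ ↦
      forall_ne_of_card_le_card_filter_add_one (p := (e ∈ S ·)) (by grind)
    by_cases hef : e ∈ S f
    · exact mem_union_left _ (mem_inter.mpr ⟨hef, hall f' hf' (hdisj e he hef) g hg hgf'⟩)
    · exact mem_union_right _
        (mem_inter.mpr ⟨hall f hf hef f' hf' hne.symm, hall f hf hef g hg hgf⟩)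
  have : #E ≤ 1 + 1 :=
    calc #E ≤ #(S f ∩ S g) + #(S f' ∩ S g) := (card_le_card hE_sub).trans (card_union_le _ _)
      _ ≤ 1 + 1 := add_le_add (hpair f hf g hg hgf.symm) (hpair f' hf' g hg hgf'.symm)
  omega

theorem exists_shared_edge_through_vertex {V : Type*} [Fintype V] [DecidableEq V]
    (G : SimpleGraph V) [DecidableRel G.Adj] (faces : Finset (Finset V))
    (bd : Finset V → Finset (Sym2 V))
    (hvertices : ∀ f ∈ faces, ∀ v : V, v ∈ f ↔ ∃ e ∈ bd f, v ∈ e)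
    (htwofaces : ∀ e ∈ G.edgeFinset, (faces.filter (fun f => e ∈ bd f)).card = 2)
    (hshared : ∀ f ∈ faces, ∀ f' ∈ faces, f ≠ f' → (bd f ∩ bd f').card ≤ 1)
    {v : V} (hdeg : G.degree v = 3) (hthreefaces : (faces.filter (fun f => v ∈ f)).card = 3)
    {f f' : Finset V} (hf : f ∈ faces) (hf' : f' ∈ faces) (hne : f ≠ f')
    (hvf : v ∈ f) (hvf' : v ∈ f') :
    ∃ e ∈ bd f, e ∈ bd f' ∧ v ∈ e := by
  have hcover : ∀ e ∈ G.incidenceFinset v,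
      2 ≤ #((faces.filter (fun f => v ∈ f)).filter (e ∈ bd ·)) := by
    intro e he
    obtain ⟨heG, hve⟩ := (G.mem_incidenceFinset (v := v) e).mp he
    rw [← htwofaces e (G.mem_edgeFinset.mpr heG)]
    refine card_le_card fun g hg ↦ ?_
    obtain ⟨hg, heg⟩ := mem_filter.mp hg
    exact mem_filter.mpr ⟨mem_filter.mpr ⟨hg, (hvertices g hg v).mpr ⟨e, heg, hve⟩⟩, heg⟩
  obtain ⟨e, he, hef, hef'⟩ := exists_common_mem_of_double_cover hthreefaces
    (by simp [hdeg]) hcover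
    (fun g hg h hh ↦ hshared g (mem_filter.mp hg).1 h (mem_filter.mp hh).1)
    (mem_filter.mpr ⟨hf, hvf⟩) (mem_filter.mpr ⟨hf', hvf'⟩) hne
  exact ⟨e, hef, hef', ((G.mem_incidenceFinset (v := v) e).mp he).2⟩

/-- Any two distinct faces of a 2-colex intersect in an even number of
vertices: either they are disjoint, or they intersect in exactly the two endpoints of a
shared edge.  The 2-colex is modeled as a trivalent graph `G` without parallel edges,
together with its faces: each face has a set of boundary edges `bd f ⊆ E(G)`, its vertex
set `f` consists of the endpoints of its boundary edges, every edge lies on exactly two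
faces, every vertex lies on exactly three faces (one of each color), and two distinct
faces share at most one edge. -/
theorem distinct_faces_share_zero_or_two_vertices
    {V : Type*} [Fintype V] [DecidableEq V]
    (G : SimpleGraph V) [DecidableRel G.Adj]
    (htrivalent : ∀ v : V, G.degree v = 3)
    (faces : Finset (Finset V))
    (bd : Finset V → Finset (Sym2 V))
    (hbd_edges : ∀ f ∈ faces, ∀ e ∈ bd f, e ∈ G.edgeFinset)
    (hvertices : ∀ f ∈ faces, ∀ v : V, v ∈ f ↔ ∃ e ∈ bd f, v ∈ e)
    (htwofaces : ∀ e ∈ G.edgeFinset, (faces.filter (fun f => e ∈ bd f)).card = 2)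
    (hthreefaces : ∀ v : V, (faces.filter (fun f => v ∈ f)).card = 3)
    (hshared : ∀ f ∈ faces, ∀ f' ∈ faces, f ≠ f' → (bd f ∩ bd f').card ≤ 1) :
    ∀ f ∈ faces, ∀ f' ∈ faces, f ≠ f' →
      f ∩ f' = ∅ ∨
      ∃ u v : V, u ≠ v ∧ s(u, v) ∈ bd f ∩ bd f' ∧ f ∩ f' = {u, v} := by
  intro f hf f' hf' hne
  rcases (f ∩ f').eq_empty_or_nonempty with hempty | ⟨v, hv⟩
  · exact .inl hempty
  have hcommon {x : V} (hx : x ∈ f ∩ f') : ∃ e ∈ bd f, e ∈ bd f' ∧ x ∈ e :=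
    exists_shared_edge_through_vertex G faces bd hvertices htwofaces hshared (htrivalent x)
      (hthreefaces x) hf hf' hne (mem_inter.mp hx).1 (mem_inter.mp hx).2
  obtain ⟨⟨u, w⟩, hef, hef', -⟩ := hcommon hv
  have hunique {e : Sym2 V} (hef₁ : e ∈ bd f) (hef'₁ : e ∈ bd f') : e = s(u, w) :=
    card_le_one.mp (hshared f hf f' hf' hne) _ (mem_inter.mpr ⟨hef₁, hef'₁⟩) _
      (mem_inter.mpr ⟨hef, hef'⟩)
  refine .inr ⟨u, w, G.ne_of_adj (G.mem_edgeFinset.mp (hbd_edges f hf _ hef)),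
    mem_inter.mpr ⟨hef, hef'⟩, ?_⟩
  ext x
  constructor
  · intro hx
    obtain ⟨e, hxf, hxf', hxe⟩ := hcommon hx
    simpa [hunique hxf hxf'] using hxe
  · intro hx
    have hxe : x ∈ s(u, w) := by simpa using hx
    exact mem_inter.mpr
      ⟨(hvertices f hf x).mpr ⟨_, hef, hxe⟩, (hvertices f' hf' x).mpr ⟨_, hef', hxe⟩⟩
end

section
/- Let f be a face with 2ℓ vertices. The 4ℓ-2 operators consisting of: Z_{2i-1}Z_{2i} and X_{2i-1}X_{2i} for i=1..ℓ, Z_{2i}Z_{2i+1} for i=1..ℓ-1, and X_{2i}X_{2i+1} for i≠m (for any fixed m in 1..ℓ, indices mod 2ℓ), together with the two single-qubit operators X_1 and Z_{2m}, generate the full Pauli group (mod phases) on the 2ℓ qubits of f; equivalently, their symplectic vectors span F_2^{4ℓ}. -/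
/-!
The X-parts and the Z-parts of the generators can be treated separately. On each side the
two-qubit operators are the edges `e_k + e_{k+1}` of a path through all `2ℓ` vertices of the face
(0-based labels): for Z the path `0, 1, …, 2ℓ - 1`, for X the cycle with the edge `{2m - 1, 2m}`
removed. Adding an edge to `e_k` moves it to its neighbour, so the single-qubit operator on each
side reaches every vertex of its path, hence every basis vector of `F₂^{2ℓ}`.
-/

/-- The standard basis vector `e_k ∈ F₂^N`, index taken modulo `N`. -/
def basisVec (N k : ℕ) : Fin N → ZMod 2 := fun j => if (j : ℕ) = k % N then 1 else 0

/-- The edge-indicator vector `e_k + e_{k+1} ∈ F₂^N` (indices mod `N`). -/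
def edgeVec (N k : ℕ) : Fin N → ZMod 2 := basisVec N k + basisVec N (k + 1)

open Submodule

lemma basisVec_add_edgeVec (N k : ℕ) : basisVec N k + edgeVec N k = basisVec N (k + 1) := by
  ext j
  simp only [edgeVec, Pi.add_apply, ← add_assoc, CharTwo.add_self_eq_zero, zero_add]

lemma basisVec_self (N : ℕ) : basisVec N N = basisVec N 0 := by
  unfold basisVec
  rw [Nat.mod_self, Nat.zero_mod]

lemma basisVec_val (N : ℕ) (i : Fin N) : basisVec N i = Pi.single i 1 := by
  funext j
  simp [basisVec, Nat.mod_eq_of_lt i.isLt, Pi.single_apply, Fin.ext_iff]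

section Path

variable {N : ℕ} {W : Submodule (ZMod 2) (Fin N → ZMod 2)}

lemma basisVec_mem_iff_of_edgeVec_mem {a b : ℕ} (hab : a ≤ b)
    (h : ∀ k, a ≤ k → k < b → edgeVec N k ∈ W) : basisVec N a ∈ W ↔ basisVec N b ∈ W := by
  induction b, hab using Nat.le_induction with
  | base => rfl
  | succ b hab ih =>
    rw [ih fun k hak hkb => h k hak (by omega), ← basisVec_add_edgeVec,
      Submodule.add_mem_iff_left W (h b hab (by omega))]

lemma eq_top_of_basisVec_mem (h : ∀ k < N, basisVec N k ∈ W) : W = ⊤ := by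
  rw [eq_top_iff, ← (Pi.basisFun (ZMod 2) (Fin N)).span_eq, span_le]
  rintro _ ⟨i, rfl⟩
  simpa [basisVec_val] using h i i.isLt

lemma eq_top_of_edgeVec_mem_path {c : ℕ} (hc : c < N) (h : ∀ k, k + 1 < N → edgeVec N k ∈ W)
    (hmem : basisVec N c ∈ W) : W = ⊤ := by
  refine eq_top_of_basisVec_mem fun t ht => ?_
  rcases le_total c t with hct | htc
  · exact (basisVec_mem_iff_of_edgeVec_mem hct fun k _ hk => h k (by omega)).1 hmem
  · exact (basisVec_mem_iff_of_edgeVec_mem htc fun k _ hk => h k (by omega)).2 hmem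

lemma eq_top_of_edgeVec_mem_cycle (c : ℕ) (h : ∀ k < N, k ≠ c → edgeVec N k ∈ W)
    (hmem : basisVec N 0 ∈ W) : W = ⊤ := by
  refine eq_top_of_basisVec_mem fun t ht => ?_
  rcases le_or_gt t c with htc | hct
  · exact (basisVec_mem_iff_of_edgeVec_mem (Nat.zero_le t)
      fun k _ hk => h k (by omega) (by omega)).1 hmem
  · exact (basisVec_mem_iff_of_edgeVec_mem ht.le
      fun k hk hk' => h k hk' (by omega)).2 (basisVec_self N ▸ hmem)

end Path

lemma Submodule.eq_top_of_comap_inl_of_comap_inr {R M M₂ : Type*} [Semiring R]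
    [AddCommMonoid M] [AddCommMonoid M₂] [Module R M] [Module R M₂] {V : Submodule R (M × M₂)}
    (hl : V.comap (LinearMap.inl R M M₂) = ⊤) (hr : V.comap (LinearMap.inr R M M₂) = ⊤) :
    V = ⊤ := by
  rw [eq_top_iff, ← prod_top, prod_le_iff, map_le_iff_le_comap, map_le_iff_le_comap, hl, hr]
  exact ⟨le_rfl, le_rfl⟩

theorem hopping_operators_and_splitting_span_general
    (ℓ m : ℕ) (hℓ : 0 < ℓ) (hmℓ : m ≤ ℓ) :
    Submodule.span (ZMod 2)
      ({p : (Fin (2 * ℓ) → ZMod 2) × (Fin (2 * ℓ) → ZMod 2) |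
          (∃ i, 1 ≤ i ∧ i ≤ ℓ ∧ p = (0, edgeVec (2 * ℓ) (2 * i - 2))) ∨
          (∃ i, 1 ≤ i ∧ i ≤ ℓ ∧ p = (edgeVec (2 * ℓ) (2 * i - 2), 0)) ∨
          (∃ i, 1 ≤ i ∧ i ≤ ℓ - 1 ∧ p = (0, edgeVec (2 * ℓ) (2 * i - 1))) ∨
          (∃ i, 1 ≤ i ∧ i ≤ ℓ ∧ i ≠ m ∧ p = (edgeVec (2 * ℓ) (2 * i - 1), 0)) ∨
          p = (basisVec (2 * ℓ) 0, 0) ∨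
          p = (0, basisVec (2 * ℓ) (2 * m - 1))}) = ⊤ := by
  refine eq_top_of_comap_inl_of_comap_inr
    (eq_top_of_edgeVec_mem_cycle (2 * m - 1) (fun k _ hk => ?_)
      (subset_span (Or.inr (Or.inr (Or.inr (Or.inr (Or.inl rfl)))))))
    (eq_top_of_edgeVec_mem_path (c := 2 * m - 1) (by omega) (fun k hk => ?_)
      (subset_span (Or.inr (Or.inr (Or.inr (Or.inr (Or.inr rfl)))))))
  · obtain ⟨i, rfl | rfl⟩ := Nat.even_or_odd' k
    · exact subset_span (Or.inr (Or.inl ⟨i + 1, by omega, by omega, by congr⟩))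
    · exact subset_span
        (Or.inr (Or.inr (Or.inr (Or.inl ⟨i + 1, by omega, by omega, by omega, by congr⟩))))
  · obtain ⟨i, rfl | rfl⟩ := Nat.even_or_odd' k
    · exact subset_span (Or.inl ⟨i + 1, by omega, by omega, by congr⟩)
    · exact subset_span (Or.inr (Or.inr (Or.inl ⟨i + 1, by omega, by omega, by congr⟩)))

/-- Let `f` be a face with `2ℓ` vertices labeled `1, …, 2ℓ` cyclically
(vertex `v` corresponds to coordinate `v - 1`).  Pauli operators on the `2ℓ` qubits of `f`
modulo phases are identified with `F₂^{4ℓ} = F₂^{2ℓ} × F₂^{2ℓ}` (X-part, Z-part).  The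
`4ℓ - 2` operators consisting of `Z_{2i-1}Z_{2i}` and `X_{2i-1}X_{2i}` for `i = 1..ℓ`,
`Z_{2i}Z_{2i+1}` for `i = 1..ℓ-1`, and `X_{2i}X_{2i+1}` for `i = 1..ℓ` with `i ≠ m`
(indices mod `2ℓ`, `m` a fixed index in `1..ℓ`), together with the two single-qubit
operators `X_1` and `Z_{2m}`, generate the full Pauli group mod phases on the qubits of
`f`: their symplectic vectors span `F₂^{4ℓ}`. -/
theorem hopping_operators_and_splitting_span
    (ℓ m : ℕ) (hℓ : 0 < ℓ) (hm1 : 1 ≤ m) (hmℓ : m ≤ ℓ) :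
    Submodule.span (ZMod 2)
      ({p : (Fin (2 * ℓ) → ZMod 2) × (Fin (2 * ℓ) → ZMod 2) |
          (∃ i, 1 ≤ i ∧ i ≤ ℓ ∧ p = (0, edgeVec (2 * ℓ) (2 * i - 2))) ∨
          (∃ i, 1 ≤ i ∧ i ≤ ℓ ∧ p = (edgeVec (2 * ℓ) (2 * i - 2), 0)) ∨
          (∃ i, 1 ≤ i ∧ i ≤ ℓ - 1 ∧ p = (0, edgeVec (2 * ℓ) (2 * i - 1))) ∨
          (∃ i, 1 ≤ i ∧ i ≤ ℓ ∧ i ≠ m ∧ p = (edgeVec (2 * ℓ) (2 * i - 1), 0)) ∨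
          p = (basisVec (2 * ℓ) 0, 0) ∨
          p = (0, basisVec (2 * ℓ) (2 * m - 1))}) = ⊤ :=
  hopping_operators_and_splitting_span_general ℓ m hℓ hmℓ
end

section
/- The map defined on a c''-colored face f with 2ℓ vertices by: Z_{2i-1}Z_{2i} ↦ ζ_{2i} (copy 1), X_{2i-1}X_{2i} ↦ ζ_{2i} (copy 2), Z_{2i}Z_{2i+1} ↦ ξ_{2i}+ξ_{2i+1} (copy 2) for i<ℓ, X_{2i}X_{2i+1} ↦ ξ_{2i}+ξ_{2i+1} (copy 1) for i≠m, X_1 ↦ ξ_1 (copy 1), Z_{2m} ↦ ξ_{2m} (copy 2), extends to an F_2-linear isomorphism from the 4ℓ-dimensional symplectic space of Pauli operators on the 2ℓ qubits of f onto F_2^{2ℓ} ⊕ F_2^{2ℓ} that preserves the symplectic form, where each copy F_2^{2ℓ} is itself a symplectic space with Z-part basis ζ and X-part basis ξ indexed by {τ(1),...,τ(2ℓ)} with τ(2i-1)=τ(2i). -/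
/-- The standard symplectic form on Pauli operators mod phases on `N` qubits, identified
with `F₂^N × F₂^N` (X-part, Z-part); it vanishes exactly on commuting pairs. -/
def symp {N : ℕ} (u v : (Fin N → ZMod 2) × (Fin N → ZMod 2)) : ZMod 2 :=
  ∑ i, (u.1 i * v.2 i + u.2 i * v.1 i)

namespace Face16

@[simp] lemma val_mk' {n a : ℕ} (h : a < n) : ((⟨a, h⟩ : Fin n) : ℕ) = a := rfl

/-- "Halving" coefficient matrix: row `t`, column `j` is `1` iff `j ∈ {2t, 2t+1}`. -/
def Hc (ℓ : ℕ) (t : Fin ℓ) (j : Fin (2 * ℓ)) : ZMod 2 :=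
  if (j : ℕ) / 2 = (t : ℕ) then 1 else 0

def Qc (ℓ m : ℕ) (t : Fin ℓ) (j : Fin (2 * ℓ)) : ZMod 2 :=
  (if (j : ℕ) ≤ 2 * (t : ℕ) then 1 else 0) + (if m ≤ (t : ℕ) then 1 else 0)

def Sc (ℓ m : ℕ) (t : Fin ℓ) (j : Fin (2 * ℓ)) : ZMod 2 :=
  (if 2 * (t : ℕ) < (j : ℕ) then 1 else 0) + (if 2 * m ≤ (j : ℕ) then 1 else 0)

/-- Matrix-vector multiplication. -/
def mv {a b : ℕ} (c : Fin a → Fin b → ZMod 2) (x : Fin b → ZMod 2) : Fin a → ZMod 2 :=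
  fun t => ∑ j, c t j * x j

lemma mv_add {a b : ℕ} (c : Fin a → Fin b → ZMod 2) (x y : Fin b → ZMod 2) :
    mv c (x + y) = mv c x + mv c y := by
  funext t; simp [mv, mul_add, Finset.sum_add_distrib]

lemma mv_smul {a b : ℕ} (c : Fin a → Fin b → ZMod 2) (r : ZMod 2) (x : Fin b → ZMod 2) :
    mv c (r • x) = r • mv c x := by
  funext t
  simp [mv, Finset.mul_sum, mul_left_comm]

lemma mv_zero {a b : ℕ} (c : Fin a → Fin b → ZMod 2) : mv c 0 = 0 := by
  funext t; simp [mv]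

lemma mv_basis {a b : ℕ} (c : Fin a → Fin b → ZMod 2) (k k' : ℕ)
    (hk : k % b = k') (h : k' < b) :
    mv c (basisVec b k) = fun t => c t ⟨k', h⟩ := by
  funext t
  unfold mv basisVec
  rw [Finset.sum_eq_single (⟨k', h⟩ : Fin b)]
  · rw [val_mk', hk, if_pos rfl, mul_one]
  · intro j _ hj
    rw [hk, if_neg, mul_zero]
    exact fun hh => hj (Fin.ext hh)
  · intro hh; exact absurd (Finset.mem_univ _) hh

/-- The linear map underlying the isomorphism. -/
def phi (ℓ m : ℕ) :
    ((Fin (2 * ℓ) → ZMod 2) × (Fin (2 * ℓ) → ZMod 2)) →ₗ[ZMod 2]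
      (((Fin ℓ → ZMod 2) × (Fin ℓ → ZMod 2)) × ((Fin ℓ → ZMod 2) × (Fin ℓ → ZMod 2))) where
  toFun u := ((mv (Hc ℓ) u.1, mv (Qc ℓ m) u.2), (mv (Hc ℓ) u.2, mv (Sc ℓ m) u.1))
  map_add' u v := by
    simp only [Prod.fst_add, Prod.snd_add, mv_add, Prod.mk_add_mk]
  map_smul' r u := by
    simp only [Prod.smul_fst, Prod.smul_snd, mv_smul, RingHom.id_apply, Prod.smul_mk]

lemma key (ℓ m : ℕ) (k j : Fin (2 * ℓ)) :
    ∑ t : Fin ℓ, (Hc ℓ t k * Qc ℓ m t j + Sc ℓ m t k * Hc ℓ t j) =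
      if j = k then 1 else 0 := by
  have hk : (k : ℕ) / 2 < ℓ := by have := k.isLt; omega
  have hj : (j : ℕ) / 2 < ℓ := by have := j.isLt; omega
  rw [Finset.sum_add_distrib]
  have h1 : (∑ t : Fin ℓ, Hc ℓ t k * Qc ℓ m t j)
      = (if (j : ℕ) ≤ 2 * ((k : ℕ) / 2) then 1 else 0)
        + (if m ≤ (k : ℕ) / 2 then 1 else 0) := by
    rw [Finset.sum_eq_single (⟨(k : ℕ) / 2, hk⟩ : Fin ℓ)]
    · simp [Hc, Qc]
    · intro t _ ht
      simp only [Hc]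
      rw [if_neg, zero_mul]
      exact fun hh => ht (Fin.ext hh.symm)
    · intro hh; exact absurd (Finset.mem_univ _) hh
  have h2 : (∑ t : Fin ℓ, Sc ℓ m t k * Hc ℓ t j)
      = (if 2 * ((j : ℕ) / 2) < (k : ℕ) then 1 else 0)
        + (if 2 * m ≤ (k : ℕ) then 1 else 0) := by
    rw [Finset.sum_eq_single (⟨(j : ℕ) / 2, hj⟩ : Fin ℓ)]
    · simp [Hc, Sc]
    · intro t _ ht
      simp only [Hc]
      rw [if_neg, mul_zero]
      exact fun hh => ht (Fin.ext hh.symm)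
    · intro hh; exact absurd (Finset.mem_univ _) hh
  rw [h1, h2]
  rw [show (if j = k then (1 : ZMod 2) else 0)
      = (if (j : ℕ) = (k : ℕ) then 1 else 0) by simp [Fin.ext_iff]]
  split_ifs <;> first | decide | (exfalso; omega)

lemma star (ℓ m : ℕ) (x z : Fin (2 * ℓ) → ZMod 2) :
    (∑ t, (mv (Hc ℓ) x t * mv (Qc ℓ m) z t + mv (Sc ℓ m) x t * mv (Hc ℓ) z t))
      = ∑ j, x j * z j := by
  simp only [mv]
  calc
    (∑ t : Fin ℓ, ((∑ k, Hc ℓ t k * x k) * (∑ j, Qc ℓ m t j * z j)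
        + (∑ k, Sc ℓ m t k * x k) * (∑ j, Hc ℓ t j * z j)))
        = ∑ t : Fin ℓ, ∑ k : Fin (2 * ℓ), ∑ j : Fin (2 * ℓ),
            (Hc ℓ t k * Qc ℓ m t j + Sc ℓ m t k * Hc ℓ t j) * (x k * z j) := by
      refine Finset.sum_congr rfl fun t _ => ?_
      rw [Finset.sum_mul_sum, Finset.sum_mul_sum, ← Finset.sum_add_distrib]
      refine Finset.sum_congr rfl fun k _ => ?_
      rw [← Finset.sum_add_distrib]
      refine Finset.sum_congr rfl fun j _ => ?_
      ring
    _ = ∑ k : Fin (2 * ℓ), ∑ j : Fin (2 * ℓ),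
          (if j = k then (1 : ZMod 2) else 0) * (x k * z j) := by
      rw [Finset.sum_comm]
      refine Finset.sum_congr rfl fun k _ => ?_
      rw [Finset.sum_comm]
      refine Finset.sum_congr rfl fun j _ => ?_
      rw [← Finset.sum_mul, key]
    _ = ∑ j, x j * z j := by
      refine Finset.sum_congr rfl fun k _ => ?_
      simp [ite_mul]

lemma pres (ℓ m : ℕ) (u v : (Fin (2 * ℓ) → ZMod 2) × (Fin (2 * ℓ) → ZMod 2)) :
    symp u v = symp (phi ℓ m u).1 (phi ℓ m v).1 + symp (phi ℓ m u).2 (phi ℓ m v).2 := by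
  have h1 := star ℓ m u.1 v.2
  have h2 := star ℓ m v.1 u.2
  simp only [symp, phi, LinearMap.coe_mk, AddHom.coe_mk]
  rw [← Finset.sum_add_distrib]
  calc
    (∑ i, (u.1 i * v.2 i + u.2 i * v.1 i))
        = (∑ i, u.1 i * v.2 i) + ∑ i, v.1 i * u.2 i := by
      rw [← Finset.sum_add_distrib]
      exact Finset.sum_congr rfl fun i _ => by ring
    _ = (∑ t, (mv (Hc ℓ) u.1 t * mv (Qc ℓ m) v.2 t + mv (Sc ℓ m) u.1 t * mv (Hc ℓ) v.2 t))
        + ∑ t, (mv (Hc ℓ) v.1 t * mv (Qc ℓ m) u.2 t + mv (Sc ℓ m) v.1 t * mv (Hc ℓ) u.2 t) := by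
      rw [h1, h2]
    _ = _ := by
      rw [← Finset.sum_add_distrib]
      exact Finset.sum_congr rfl fun t _ => by ring

lemma inj (ℓ m : ℕ) : Function.Injective (phi ℓ m) := by
  rw [injective_iff_map_eq_zero]
  intro u hu
  have hz : ∀ v, symp u v = 0 := by
    intro v
    rw [pres ℓ m u v, hu]
    simp [symp]
  have hx : ∀ j, u.1 j = 0 := by
    intro j
    have := hz (0, Pi.single j 1)
    simpa [symp, Pi.single_apply, mul_ite, Finset.sum_ite_eq'] using this
  have hzz : ∀ j, u.2 j = 0 := by
    intro j
    have := hz (Pi.single j 1, 0)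
    simpa [symp, Pi.single_apply, mul_ite, Finset.sum_ite_eq'] using this
  exact Prod.ext (funext hx) (funext hzz)

end Face16

set_option maxHeartbeats 2000000 in
open Face16 in
/-- Let `f` be a `c''`-colored face with `2ℓ` vertices labeled `1..2ℓ`
cyclically (vertex `v` ↦ coordinate `v-1`), with `c`-edges `(2i-1, 2i)` and `c'`-edges
`(2i, 2i+1)` (mod `2ℓ`), and let `m` be a fixed index in `1..ℓ`.  The pair labels
`τ(2i-1) = τ(2i) = i` index the `ℓ` qubits of each of the two surface-code copies.  The
assignment  `Z_{2i-1}Z_{2i} ↦ ζ_{τ(2i)}` (copy 1), `X_{2i-1}X_{2i} ↦ ζ_{τ(2i)}` (copy 2),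
`Z_{2i}Z_{2i+1} ↦ ξ_{τ(2i)} + ξ_{τ(2i+1)}` (copy 2) for `i < ℓ`,
`X_{2i}X_{2i+1} ↦ ξ_{τ(2i)} + ξ_{τ(2i+1)}` (copy 1) for `i ≠ m`,
`X_1 ↦ ξ_{τ(1)}` (copy 1), `Z_{2m} ↦ ξ_{τ(2m)}` (copy 2)
extends to an `F₂`-linear isomorphism `π` from the `4ℓ`-dimensional symplectic space of
Pauli operators on the qubits of `f` onto `F₂^{2ℓ} ⊕ F₂^{2ℓ}` (two copies, each itself a
symplectic space on `ℓ` qubits) that preserves the symplectic form. -/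
theorem face_map_extends_to_symplectic_isomorphism
    (ℓ m : ℕ) (hℓ : 0 < ℓ) (hm1 : 1 ≤ m) (hmℓ : m ≤ ℓ) :
    ∃ π : ((Fin (2 * ℓ) → ZMod 2) × (Fin (2 * ℓ) → ZMod 2)) ≃ₗ[ZMod 2]
        (((Fin ℓ → ZMod 2) × (Fin ℓ → ZMod 2)) × ((Fin ℓ → ZMod 2) × (Fin ℓ → ZMod 2))),
      (∀ u v, symp u v = symp (π u).1 (π v).1 + symp (π u).2 (π v).2) ∧
      (∀ i, 1 ≤ i → i ≤ ℓ →
        π (0, edgeVec (2 * ℓ) (2 * i - 2)) = ((0, basisVec ℓ (i - 1)), 0)) ∧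
      (∀ i, 1 ≤ i → i ≤ ℓ →
        π (edgeVec (2 * ℓ) (2 * i - 2), 0) = (0, (0, basisVec ℓ (i - 1)))) ∧
      (∀ i, 1 ≤ i → i ≤ ℓ - 1 →
        π (0, edgeVec (2 * ℓ) (2 * i - 1)) =
          (0, (basisVec ℓ (i - 1) + basisVec ℓ i, 0))) ∧
      (∀ i, 1 ≤ i → i ≤ ℓ → i ≠ m →
        π (edgeVec (2 * ℓ) (2 * i - 1), 0) =
          ((basisVec ℓ (i - 1) + basisVec ℓ i, 0), 0)) ∧
      π (basisVec (2 * ℓ) 0, 0) = ((basisVec ℓ 0, 0), 0) ∧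
      π (0, basisVec (2 * ℓ) (2 * m - 1)) = (0, (basisVec ℓ (m - 1), 0)) := by
  have hrank : Module.finrank (ZMod 2) ((Fin (2 * ℓ) → ZMod 2) × (Fin (2 * ℓ) → ZMod 2))
      = Module.finrank (ZMod 2)
        (((Fin ℓ → ZMod 2) × (Fin ℓ → ZMod 2)) × ((Fin ℓ → ZMod 2) × (Fin ℓ → ZMod 2))) := by
    simp [Module.finrank_prod, Module.finrank_pi]
    ring
  refine ⟨(phi ℓ m).linearEquivOfInjective (inj ℓ m) hrank, ?_, ?_, ?_, ?_, ?_, ?_, ?_⟩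
  · intro u v
    rw [LinearMap.linearEquivOfInjective_apply, LinearMap.linearEquivOfInjective_apply]
    exact pres ℓ m u v
  · -- Z on c-edges
    intro i h1 h2
    rw [LinearMap.linearEquivOfInjective_apply]
    have hQ : mv (Qc ℓ m) (edgeVec (2 * ℓ) (2 * i - 2)) = basisVec ℓ (i - 1) := by
      have ha : (2 * i - 2) % (2 * ℓ) = 2 * i - 2 := Nat.mod_eq_of_lt (by omega)
      have hb : (2 * i - 2 + 1) % (2 * ℓ) = 2 * i - 1 := by
        rw [show 2 * i - 2 + 1 = 2 * i - 1 by omega]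
        exact Nat.mod_eq_of_lt (by omega)
      rw [edgeVec, mv_add, mv_basis _ _ _ ha (by omega), mv_basis _ _ _ hb (by omega)]
      funext t
      have ht := t.isLt
      simp only [Pi.add_apply, Qc, basisVec, val_mk',
        Nat.mod_eq_of_lt (show i - 1 < ℓ by omega)]
      split_ifs <;> first | decide | (exfalso; omega)
    have hH : mv (Hc ℓ) (edgeVec (2 * ℓ) (2 * i - 2)) = 0 := by
      have ha : (2 * i - 2) % (2 * ℓ) = 2 * i - 2 := Nat.mod_eq_of_lt (by omega)
      have hb : (2 * i - 2 + 1) % (2 * ℓ) = 2 * i - 1 := by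
        rw [show 2 * i - 2 + 1 = 2 * i - 1 by omega]
        exact Nat.mod_eq_of_lt (by omega)
      rw [edgeVec, mv_add, mv_basis _ _ _ ha (by omega), mv_basis _ _ _ hb (by omega)]
      funext t
      have ht := t.isLt
      simp only [Pi.add_apply, Hc, val_mk', Pi.zero_apply]
      split_ifs <;> first | decide | (exfalso; omega)
    simp only [phi, LinearMap.coe_mk, AddHom.coe_mk, hQ, hH, mv_zero]
    rfl
  · -- X on c-edges
    intro i h1 h2
    rw [LinearMap.linearEquivOfInjective_apply]
    have hS : mv (Sc ℓ m) (edgeVec (2 * ℓ) (2 * i - 2)) = basisVec ℓ (i - 1) := by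
      have ha : (2 * i - 2) % (2 * ℓ) = 2 * i - 2 := Nat.mod_eq_of_lt (by omega)
      have hb : (2 * i - 2 + 1) % (2 * ℓ) = 2 * i - 1 := by
        rw [show 2 * i - 2 + 1 = 2 * i - 1 by omega]
        exact Nat.mod_eq_of_lt (by omega)
      rw [edgeVec, mv_add, mv_basis _ _ _ ha (by omega), mv_basis _ _ _ hb (by omega)]
      funext t
      have ht := t.isLt
      simp only [Pi.add_apply, Sc, basisVec, val_mk',
        Nat.mod_eq_of_lt (show i - 1 < ℓ by omega)]
      split_ifs <;> first | decide | (exfalso; omega)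
    have hH : mv (Hc ℓ) (edgeVec (2 * ℓ) (2 * i - 2)) = 0 := by
      have ha : (2 * i - 2) % (2 * ℓ) = 2 * i - 2 := Nat.mod_eq_of_lt (by omega)
      have hb : (2 * i - 2 + 1) % (2 * ℓ) = 2 * i - 1 := by
        rw [show 2 * i - 2 + 1 = 2 * i - 1 by omega]
        exact Nat.mod_eq_of_lt (by omega)
      rw [edgeVec, mv_add, mv_basis _ _ _ ha (by omega), mv_basis _ _ _ hb (by omega)]
      funext t
      have ht := t.isLt
      simp only [Pi.add_apply, Hc, val_mk', Pi.zero_apply]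
      split_ifs <;> first | decide | (exfalso; omega)
    simp only [phi, LinearMap.coe_mk, AddHom.coe_mk, hS, hH, mv_zero]
    rfl
  · -- Z on c'-edges, i ≤ ℓ - 1
    intro i h1 h2
    rw [LinearMap.linearEquivOfInjective_apply]
    have hQ : mv (Qc ℓ m) (edgeVec (2 * ℓ) (2 * i - 1)) = 0 := by
      have ha : (2 * i - 1) % (2 * ℓ) = 2 * i - 1 := Nat.mod_eq_of_lt (by omega)
      have hb : (2 * i - 1 + 1) % (2 * ℓ) = 2 * i := by
        rw [show 2 * i - 1 + 1 = 2 * i by omega]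
        exact Nat.mod_eq_of_lt (by omega)
      rw [edgeVec, mv_add, mv_basis _ _ _ ha (by omega), mv_basis _ _ _ hb (by omega)]
      funext t
      have ht := t.isLt
      simp only [Pi.add_apply, Qc, val_mk', Pi.zero_apply]
      split_ifs <;> first | decide | (exfalso; omega)
    have hH : mv (Hc ℓ) (edgeVec (2 * ℓ) (2 * i - 1)) = basisVec ℓ (i - 1) + basisVec ℓ i := by
      have ha : (2 * i - 1) % (2 * ℓ) = 2 * i - 1 := Nat.mod_eq_of_lt (by omega)
      have hb : (2 * i - 1 + 1) % (2 * ℓ) = 2 * i := by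
        rw [show 2 * i - 1 + 1 = 2 * i by omega]
        exact Nat.mod_eq_of_lt (by omega)
      rw [edgeVec, mv_add, mv_basis _ _ _ ha (by omega), mv_basis _ _ _ hb (by omega)]
      funext t
      have ht := t.isLt
      simp only [Pi.add_apply, Hc, basisVec, val_mk',
        Nat.mod_eq_of_lt (show i - 1 < ℓ by omega), Nat.mod_eq_of_lt (show i < ℓ by omega)]
      split_ifs <;> first | decide | (exfalso; omega)
    simp only [phi, LinearMap.coe_mk, AddHom.coe_mk, hQ, hH, mv_zero]
    rfl
  · -- X on c'-edges, i ≠ m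
    intro i h1 h2 him
    rw [LinearMap.linearEquivOfInjective_apply]
    rcases eq_or_lt_of_le h2 with heq | hlt
    · -- i = ℓ (wrap-around)
      have ha : (2 * i - 1) % (2 * ℓ) = 2 * i - 1 := Nat.mod_eq_of_lt (by omega)
      have hb : (2 * i - 1 + 1) % (2 * ℓ) = 0 := by
        rw [show 2 * i - 1 + 1 = 2 * ℓ by omega]
        exact Nat.mod_self _
      have hS : mv (Sc ℓ m) (edgeVec (2 * ℓ) (2 * i - 1)) = 0 := by
        rw [edgeVec, mv_add, mv_basis _ _ _ ha (by omega), mv_basis _ _ _ hb (by omega)]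
        funext t
        have ht := t.isLt
        have him' : i ≠ m := him
        simp only [Pi.add_apply, Sc, val_mk', Pi.zero_apply]
        split_ifs <;> first | decide | (exfalso; omega)
      have hH : mv (Hc ℓ) (edgeVec (2 * ℓ) (2 * i - 1)) = basisVec ℓ (i - 1) + basisVec ℓ i := by
        rw [edgeVec, mv_add, mv_basis _ _ _ ha (by omega), mv_basis _ _ _ hb (by omega)]
        funext t
        have ht := t.isLt
        have hmod : i % ℓ = 0 := by rw [heq]; exact Nat.mod_self _
        simp only [Pi.add_apply, Hc, basisVec, val_mk',
          Nat.mod_eq_of_lt (show i - 1 < ℓ by omega), hmod]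
        split_ifs <;> first | decide | (exfalso; omega)
      simp only [phi, LinearMap.coe_mk, AddHom.coe_mk, hS, hH, mv_zero]
      rfl
    · -- i < ℓ
      have hS : mv (Sc ℓ m) (edgeVec (2 * ℓ) (2 * i - 1)) = 0 := by
        have ha : (2 * i - 1) % (2 * ℓ) = 2 * i - 1 := Nat.mod_eq_of_lt (by omega)
        have hb : (2 * i - 1 + 1) % (2 * ℓ) = 2 * i := by
          rw [show 2 * i - 1 + 1 = 2 * i by omega]
          exact Nat.mod_eq_of_lt (by omega)
        rw [edgeVec, mv_add, mv_basis _ _ _ ha (by omega), mv_basis _ _ _ hb (by omega)]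
        funext t
        have ht := t.isLt
        have him' : i ≠ m := him
        simp only [Pi.add_apply, Sc, val_mk', Pi.zero_apply]
        split_ifs <;> first | decide | (exfalso; omega)
      have hH : mv (Hc ℓ) (edgeVec (2 * ℓ) (2 * i - 1)) = basisVec ℓ (i - 1) + basisVec ℓ i := by
        have ha : (2 * i - 1) % (2 * ℓ) = 2 * i - 1 := Nat.mod_eq_of_lt (by omega)
        have hb : (2 * i - 1 + 1) % (2 * ℓ) = 2 * i := by
          rw [show 2 * i - 1 + 1 = 2 * i by omega]
          exact Nat.mod_eq_of_lt (by omega)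
        rw [edgeVec, mv_add, mv_basis _ _ _ ha (by omega), mv_basis _ _ _ hb (by omega)]
        funext t
        have ht := t.isLt
        simp only [Pi.add_apply, Hc, basisVec, val_mk',
          Nat.mod_eq_of_lt (show i - 1 < ℓ by omega), Nat.mod_eq_of_lt (show i < ℓ by omega)]
        split_ifs <;> first | decide | (exfalso; omega)
      simp only [phi, LinearMap.coe_mk, AddHom.coe_mk, hS, hH, mv_zero]
      rfl
  · -- X₁
    rw [LinearMap.linearEquivOfInjective_apply]
    have hS : mv (Sc ℓ m) (basisVec (2 * ℓ) 0) = 0 := by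
      rw [mv_basis _ _ _ (Nat.zero_mod (2 * ℓ)) (show 0 < 2 * ℓ by omega)]
      funext t
      simp only [Sc, val_mk', Pi.zero_apply]
      split_ifs <;> first | decide | (exfalso; omega)
    have hH : mv (Hc ℓ) (basisVec (2 * ℓ) 0) = basisVec ℓ 0 := by
      rw [mv_basis _ _ _ (Nat.zero_mod (2 * ℓ)) (show 0 < 2 * ℓ by omega)]
      funext t
      simp only [Hc, basisVec, val_mk', Nat.zero_mod]
      split_ifs <;> simp_all
    simp only [phi, LinearMap.coe_mk, AddHom.coe_mk, hS, hH, mv_zero]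
    rfl
  · -- Z_{2m}
    rw [LinearMap.linearEquivOfInjective_apply]
    have hQ : mv (Qc ℓ m) (basisVec (2 * ℓ) (2 * m - 1)) = 0 := by
      rw [mv_basis _ _ _ (Nat.mod_eq_of_lt (show 2 * m - 1 < 2 * ℓ by omega)) (show 2 * m - 1 < 2 * ℓ by omega)]
      funext t
      have ht := t.isLt
      simp only [Qc, val_mk', Pi.zero_apply]
      split_ifs <;> first | decide | (exfalso; omega)
    have hH : mv (Hc ℓ) (basisVec (2 * ℓ) (2 * m - 1)) = basisVec ℓ (m - 1) := by
      rw [mv_basis _ _ _ (Nat.mod_eq_of_lt (show 2 * m - 1 < 2 * ℓ by omega)) (show 2 * m - 1 < 2 * ℓ by omega)]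
      funext t
      have ht := t.isLt
      simp only [Hc, basisVec, val_mk', Nat.mod_eq_of_lt (show m - 1 < ℓ by omega)]
      split_ifs <;> first | decide | (exfalso; omega)
    simp only [phi, LinearMap.coe_mk, AddHom.coe_mk, hQ, hH, mv_zero]
    rfl
end

section
/- Under the map π of the previous construction applied to every c''-colored face, the Z-type stabilizer B_f^Z of a c'-colored face f of the 2-colex maps to the face operator of the corresponding face τ(f) in the first surface code copy: π(B_f^Z) = product over edges e in the boundary of τ(f) of Z_e in copy 1. -/
/-! The Z-part of `B_f^Z` is the indicator of the vertices of `f`. These are partitioned by the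
`c`-colored boundary edges `{u i, v i}`, so it is the sum of the hopping operators `Z_{u i} Z_{v i}`;
by linearity `π` sends it to `∑ i, [Z_{t i}]₁`, and the `t i` are distinct, so this is the indicator
of the boundary of `τ(f)` on the first copy. -/

/-- Indicator vector in `F₂` of a finite set. -/
def indic {α : Type*} [DecidableEq α] (s : Finset α) : α → ZMod 2 :=
  fun x => if x ∈ s then 1 else 0

section indic

variable {α ι : Type*} [DecidableEq α]

lemma indic_eq_sum_single (s : Finset α) : indic s = ∑ x ∈ s, Pi.single x 1 := by
  funext y
  simp [indic, Finset.sum_apply, Pi.single_apply]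

lemma indic_pair {a b : α} (hab : a ≠ b) : indic {a, b} = indic {a} + indic {b} := by
  simp only [indic_eq_sum_single, Finset.sum_pair hab, Finset.sum_singleton]

lemma indic_image {g : ι → α} (hg : Function.Injective g) (s : Finset ι) :
    indic (s.image g) = ∑ i ∈ s, indic {g i} := by
  simp only [indic_eq_sum_single, Finset.sum_image hg.injOn, Finset.sum_singleton]

lemma indic_image_union_image_eq_sum_pair [Fintype ι] {u v : ι → α}
    (huv : Function.Injective (Sum.elim u v)) :
    indic (Finset.univ.image u ∪ Finset.univ.image v) = ∑ i, indic {u i, v i} := by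
  have himage : Finset.univ.image u ∪ Finset.univ.image v = Finset.univ.image (Sum.elim u v) := by
    ext; simp
  have hne (i : ι) : u i ≠ v i := fun h => Sum.inl_ne_inr (huv h)
  rw [himage, indic_image huv, Fintype.sum_sum_type, ← Finset.sum_add_distrib]
  exact Finset.sum_congr rfl fun i _ => (indic_pair (hne i)).symm

end indic

theorem face_stabilizer_maps_to_plaquette_general
    {V E : Type*} [DecidableEq V] [DecidableEq E]
    (k : ℕ) (u v : Fin k → V) (t : Fin k → E)
    (hinj : Function.Injective (Sum.elim u v))
    (ht : Function.Injective t)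
    (f : Finset V)
    (hf : f = Finset.image u Finset.univ ∪ Finset.image v Finset.univ)
    (π : ((V → ZMod 2) × (V → ZMod 2)) →ₗ[ZMod 2]
        (((E → ZMod 2) × (E → ZMod 2)) × ((E → ZMod 2) × (E → ZMod 2))))
    (hhop : ∀ i : Fin k, π (0, indic {u i, v i}) = ((0, indic {t i}), 0)) :
    π (0, indic f) = ((0, indic (Finset.image t Finset.univ)), 0) := by
  rw [hf, indic_image_union_image_eq_sum_pair hinj, indic_image ht]
  have hπ := map_sum (π ∘ₗ LinearMap.inr (ZMod 2) _ _) (fun i => indic {u i, v i}) Finset.univ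
  have hfirst := map_sum (LinearMap.inl (ZMod 2) _ ((E → ZMod 2) × (E → ZMod 2)) ∘ₗ
    LinearMap.inr (ZMod 2) (E → ZMod 2) _) (fun i => indic {t i}) Finset.univ
  simp only [LinearMap.comp_apply, LinearMap.inr_apply, LinearMap.inl_apply, hhop] at hπ hfirst
  rw [hπ, ← hfirst]

/-- Let `f` be a `c'`-colored face of the 2-colex `Γ` whose `c`-colored
boundary edges are `(u i, v i)`, `i = 1..k` (these edges are pairwise disjoint and their
endpoints exhaust the vertices of `f`), and let `t i = τ(u i) = τ(v i)` be the
corresponding edges of the contracted complex `τ_c(Γ)`, which are exactly the boundary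
edges of the face `τ(f)`.  If the linear map
`π : P_{V(Γ)} → P_{E(Γ₁)} ⊗ P_{E(Γ₂)}` sends each hopping operator `Z_{u i} Z_{v i}` to
`[Z_{t i}]₁`, then it sends the face stabilizer `B_f^Z` to the surface-code face operator
of `τ(f)` on the first copy: `π(B_f^Z) = ∏_{e ∈ ∂(τ(f))} [Z_e]₁`. -/
theorem face_stabilizer_maps_to_plaquette
    {V E : Type*} [Fintype V] [DecidableEq V] [Fintype E] [DecidableEq E]
    (k : ℕ) (u v : Fin k → V) (t : Fin k → E)
    (hinj : Function.Injective (Sum.elim u v))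
    (ht : Function.Injective t)
    (f : Finset V)
    (hf : f = Finset.image u Finset.univ ∪ Finset.image v Finset.univ)
    (π : ((V → ZMod 2) × (V → ZMod 2)) →ₗ[ZMod 2]
        (((E → ZMod 2) × (E → ZMod 2)) × ((E → ZMod 2) × (E → ZMod 2))))
    (hhop : ∀ i : Fin k, π (0, indic {u i, v i}) = ((0, indic {t i}), 0)) :
    π (0, indic f) = ((0, indic (Finset.image t Finset.univ)), 0) :=
  face_stabilizer_maps_to_plaquette_general k u v t hinj ht f hf π hhop
end
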